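/- arXiv:2005.14195 — 2 statements merged into one kernel-verified Lean document; each statement's English description precedes it below -/
import Mathlib

section
/- Let S be a finite collection of bar charts and let p be a feasible packing of S such that every cell containing at least one bar, except possibly one such cell, has total bar height strictly greater than 1/2. Then L(p) ≤ 2·OPT(S) + 1, where OPT(S) is the minimum length of a feasible packing of S. -/
/-!
A bar chart (BC) `i` has `l i` bars with heights `h i 0, …, h i (l i - 1)` in `(0,1]`.
A packing `p` places bar `j` of BC `i` in cell `p i + j` (cells are `1, 2, …`).
-/

/-- Validity of the data: each BC is nonempty and all bar heights lie in `(0,1]`. -/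
def ValidBC {n : ℕ} (l : Fin n → ℕ) (h : Fin n → ℕ → ℝ) : Prop :=
  (∀ i, 0 < l i) ∧ ∀ i j, j < l i → h i j ∈ Set.Ioc (0 : ℝ) 1

/-- Total height of the bars lying in cell `c` under packing `p`. -/
def cellLoad {n : ℕ} (l : Fin n → ℕ) (h : Fin n → ℕ → ℝ) (p : Fin n → ℕ) (c : ℕ) : ℝ :=
  ∑ i, ∑ j ∈ Finset.range (l i), if p i + j = c then h i j else 0

/-- A packing is feasible if cells start at 1 and every cell carries total height at most 1. -/
def Feasible {n : ℕ} (l : Fin n → ℕ) (h : Fin n → ℕ → ℝ) (p : Fin n → ℕ) : Prop :=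
  (∀ i, 1 ≤ p i) ∧ ∀ c, cellLoad l h p c ≤ 1

/-- The (finite) set of cells containing at least one bar. -/
def occupied {n : ℕ} (l : Fin n → ℕ) (p : Fin n → ℕ) : Finset ℕ :=
  (Finset.univ.sigma fun i => Finset.range (l i)).image fun x => p x.1 + x.2

/-- The length of a packing: the number of cells containing at least one bar. -/
def packLen {n : ℕ} (l : Fin n → ℕ) (p : Fin n → ℕ) : ℕ :=
  (occupied l p).card

/-- The minimum length of a feasible packing. -/
noncomputable def OPT {n : ℕ} (l : Fin n → ℕ) (h : Fin n → ℕ → ℝ) : ℕ :=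
  sInf {m | ∃ p, Feasible l h p ∧ packLen l p = m}

lemma cellLoad_nonneg' {n : ℕ} (l : Fin n → ℕ) (h : Fin n → ℕ → ℝ) (hval : ValidBC l h)
    (p : Fin n → ℕ) (c : ℕ) : 0 ≤ cellLoad l h p c := by
  apply Finset.sum_nonneg; intro i _
  apply Finset.sum_nonneg; intro j hj
  rw [Finset.mem_range] at hj
  split
  · exact le_of_lt (hval.2 i j hj).1
  · exact le_refl _

lemma mem_occupied' {n : ℕ} (l : Fin n → ℕ) (p : Fin n → ℕ) (i : Fin n) (j : ℕ)
    (hj : j < l i) : p i + j ∈ occupied l p := by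
  apply Finset.mem_image.mpr
  exact ⟨⟨i, j⟩, Finset.mem_sigma.mpr ⟨Finset.mem_univ _, Finset.mem_range.mpr hj⟩, rfl⟩

lemma sum_cellLoad' {n : ℕ} (l : Fin n → ℕ) (h : Fin n → ℕ → ℝ) (p : Fin n → ℕ) :
    ∑ c ∈ occupied l p, cellLoad l h p c = ∑ i, ∑ j ∈ Finset.range (l i), h i j := by
  unfold cellLoad
  rw [Finset.sum_comm]
  refine Finset.sum_congr rfl fun i _ => ?_
  rw [Finset.sum_comm]
  refine Finset.sum_congr rfl fun j hj => ?_
  rw [Finset.sum_ite_eq (occupied l p) (p i + j) (fun _ => h i j),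
    if_pos (mem_occupied' l p i j (Finset.mem_range.mp hj))]

/-- if under a feasible packing every occupied cell, except possibly
one cell `c₀`, has total bar height greater than `1/2`, then the packing length
is at most `2·OPT + 1`. -/
theorem length_le_two_opt_add_one_of_dense {n : ℕ} (l : Fin n → ℕ) (h : Fin n → ℕ → ℝ)
    (hval : ValidBC l h) (p : Fin n → ℕ) (hp : Feasible l h p) (c₀ : ℕ)
    (hdense : ∀ c ∈ occupied l p, c ≠ c₀ → 1 / 2 < cellLoad l h p c) :
    packLen l p ≤ 2 * OPT l h + 1 := by
  set T : ℝ := ∑ i, ∑ j ∈ Finset.range (l i), h i j with hT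
  -- OPT is attained
  have hne : {m | ∃ q, Feasible l h q ∧ packLen l q = m}.Nonempty :=
    ⟨packLen l p, p, hp, rfl⟩
  obtain ⟨q, hq, hqlen⟩ := Nat.sInf_mem hne
  -- T ≤ OPT
  have hT_le : T ≤ (OPT l h : ℝ) := by
    rw [hT, ← sum_cellLoad' l h q]
    calc ∑ c ∈ occupied l q, cellLoad l h q c ≤ ∑ _c ∈ occupied l q, (1 : ℝ) :=
          Finset.sum_le_sum fun c _ => hq.2 c
      _ = (packLen l q : ℝ) := by simp [packLen]
      _ = (OPT l h : ℝ) := by rw [hqlen]; rfl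
  -- lower bound on T
  have hcard : (packLen l p : ℝ) ≤ ((occupied l p \ {c₀}).card : ℝ) + 1 := by
    have : packLen l p ≤ (occupied l p \ {c₀}).card + 1 := by
      have hsub : occupied l p ⊆ insert c₀ (occupied l p \ {c₀}) := by
        intro x hx
        by_cases hxc : x = c₀
        · simp [hxc]
        · exact Finset.mem_insert_of_mem (Finset.mem_sdiff.mpr ⟨hx, by simp [hxc]⟩)
      calc packLen l p ≤ (insert c₀ (occupied l p \ {c₀})).card := Finset.card_le_card hsub
        _ ≤ (occupied l p \ {c₀}).card + 1 := Finset.card_insert_le _ _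
    exact_mod_cast this
  have hlow : ((occupied l p \ {c₀}).card : ℝ) * (1 / 2) ≤ T := by
    calc ((occupied l p \ {c₀}).card : ℝ) * (1 / 2)
        ≤ ∑ c ∈ occupied l p \ {c₀}, cellLoad l h p c := by
          have := Finset.card_nsmul_le_sum (occupied l p \ {c₀}) (cellLoad l h p) (1 / 2)
            (fun c hc => by
              obtain ⟨hc1, hc2⟩ := Finset.mem_sdiff.mp hc
              exact le_of_lt (hdense c hc1 (by simpa using hc2)))
          simpa [nsmul_eq_mul] using this
      _ ≤ ∑ c ∈ occupied l p, cellLoad l h p c :=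
          Finset.sum_le_sum_of_subset_of_nonneg (Finset.sdiff_subset)
            (fun c _ _ => cellLoad_nonneg' l h hval p c)
      _ = T := (sum_cellLoad' l h p).trans hT.symm
  have : (packLen l p : ℝ) ≤ 2 * (OPT l h : ℝ) + 1 := by nlinarith
  exact_mod_cast this
end

section
/- Let S be a finite collection of n identical non-increasing bar charts (all BCs equal, with h^j ≥ h^{j+1} for all j). Then the greedy packing q, defined by q(1) = 1 and q(k+1) = the least integer m ≥ q(k) such that placing BC k+1 at cell m keeps the packing feasible, is a feasible packing with L(q) = OPT(S), the minimum length over all feasible packings of S (not only order-preserving ones). -/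
/-- Contribution to cell `c` of BC `i` when placed at cell `m`. -/
def bcLoad {n : ℕ} (l : Fin n → ℕ) (h : Fin n → ℕ → ℝ) (i : Fin n) (m c : ℕ) : ℝ :=
  ∑ j ∈ Finset.range (l i), if m + j = c then h i j else 0

/-- Total height in cell `c` contributed by the BCs of index less than `K`. -/
def partialLoad {n : ℕ} (l : Fin n → ℕ) (h : Fin n → ℕ → ℝ) (q : Fin n → ℕ)
    (K c : ℕ) : ℝ :=
  ∑ i : Fin n, if (i : ℕ) < K then bcLoad l h i (q i) c else 0

/-- `q` is the greedy packing: BC 1 is placed at cell 1 and, inductively, BC `k+1`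
is placed at the least cell `m ≥ q k` such that placing it there keeps the packing
of the first `k+1` BCs feasible. -/
def IsGreedy {n : ℕ} (l : Fin n → ℕ) (h : Fin n → ℕ → ℝ) (q : Fin n → ℕ) : Prop :=
  (∀ h0 : 0 < n, q ⟨0, h0⟩ = 1) ∧
  ∀ (k : ℕ) (hk : k + 1 < n),
    q ⟨k + 1, hk⟩ = sInf {m | q ⟨k, Nat.lt_of_succ_lt hk⟩ ≤ m ∧
      ∀ c, partialLoad l h q (k + 1) c + bcLoad l h ⟨k + 1, hk⟩ m c ≤ 1}


namespace BCAux

noncomputable def HE (L : ℕ) (hh : ℕ → ℝ) (j : ℕ) : ℝ := if j < L then hh j else 0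

noncomputable def BL (L : ℕ) (hh : ℕ → ℝ) (m c : ℕ) : ℝ :=
  if m ≤ c then HE L hh (c - m) else 0

variable {L : ℕ} {hh : ℕ → ℝ}

lemma hh_anti (hni : ∀ j : ℕ, j + 1 < L → hh (j + 1) ≤ hh j) :
    ∀ a b : ℕ, a ≤ b → b < L → hh b ≤ hh a := by
  intro a b hab hbL
  induction b with
  | zero => cases Nat.le_zero.mp hab; exact le_refl _
  | succ b ih =>
    rcases Nat.eq_or_lt_of_le hab with h | h
    · exact h ▸ le_refl _
    · exact le_trans (hni b hbL) (ih (Nat.lt_succ_iff.mp h) (Nat.lt_of_succ_lt hbL))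

lemma HE_nonneg (hpos : ∀ j, j < L → 0 < hh j) (j : ℕ) : 0 ≤ HE L hh j := by
  unfold HE; split
  · exact le_of_lt (hpos _ ‹_›)
  · exact le_refl _

lemma HE_le_one (hle : ∀ j, j < L → hh j ≤ 1) (j : ℕ) : HE L hh j ≤ 1 := by
  unfold HE; split
  · exact hle _ ‹_›
  · exact zero_le_one

lemma HE_anti (hpos : ∀ j, j < L → 0 < hh j)
    (hni : ∀ j : ℕ, j + 1 < L → hh (j + 1) ≤ hh j)
    {a b : ℕ} (hab : a ≤ b) : HE L hh b ≤ HE L hh a := by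
  unfold HE
  by_cases hb : b < L
  · rw [if_pos hb, if_pos (lt_of_le_of_lt hab hb)]
    exact hh_anti hni a b hab hb
  · rw [if_neg hb]
    exact HE_nonneg hpos a

lemma BL_nonneg (hpos : ∀ j, j < L → 0 < hh j) (m c : ℕ) : 0 ≤ BL L hh m c := by
  unfold BL; split
  · exact HE_nonneg hpos _
  · exact le_refl _

lemma BL_le_one (hpos : ∀ j, j < L → 0 < hh j) (hle : ∀ j, j < L → hh j ≤ 1) (m c : ℕ) :
    BL L hh m c ≤ 1 := by
  unfold BL; split
  · exact HE_le_one hle _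
  · exact zero_le_one

lemma BL_zero_left {m c : ℕ} (h : c < m) : BL L hh m c = 0 := by
  unfold BL; rw [if_neg (by omega)]

lemma BL_zero_right {m c : ℕ} (h : m + L ≤ c) : BL L hh m c = 0 := by
  unfold BL
  split
  · unfold HE; rw [if_neg (by omega)]
  · rfl

lemma BL_anti (hpos : ∀ j, j < L → 0 < hh j)
    (hni : ∀ j : ℕ, j + 1 < L → hh (j + 1) ≤ hh j)
    {m m' c : ℕ} (h1 : m' ≤ m) (h2 : m ≤ c) : BL L hh m' c ≤ BL L hh m c := by
  unfold BL
  rw [if_pos (le_trans h1 h2), if_pos h2]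
  exact HE_anti hpos hni (Nat.sub_le_sub_left h1 c)

lemma bcLoad_eq {n : ℕ} (i : Fin n) (m c : ℕ) :
    bcLoad (fun _ => L) (fun _ => hh) i m c = BL L hh m c := by
  unfold bcLoad BL HE
  beta_reduce
  by_cases hmc : m ≤ c
  · rw [if_pos hmc]
    by_cases hcL : c - m < L
    · rw [if_pos hcL]
      rw [Finset.sum_eq_single_of_mem (c - m) (Finset.mem_range.mpr hcL)]
      · rw [if_pos (by omega)]
      · intro j _ hne
        rw [if_neg (by omega)]
    · rw [if_neg hcL]
      apply Finset.sum_eq_zero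
      intro j hj
      rw [Finset.mem_range] at hj
      rw [if_neg (by omega)]
  · rw [if_neg hmc]
    apply Finset.sum_eq_zero
    intro j hj
    rw [if_neg (by omega)]

lemma cellLoad_eq {n : ℕ} (p : Fin n → ℕ) (c : ℕ) :
    cellLoad (fun _ => L) (fun _ => hh) p c = ∑ i, BL L hh (p i) c := by
  unfold cellLoad
  exact Finset.sum_congr rfl fun i _ => bcLoad_eq i (p i) c

lemma partialLoad_eq {n : ℕ} (q : Fin n → ℕ) (K c : ℕ) :
    partialLoad (fun _ => L) (fun _ => hh) q K c
      = ∑ i : Fin n, if (i : ℕ) < K then BL L hh (q i) c else 0 := by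
  unfold partialLoad
  refine Finset.sum_congr rfl fun i _ => ?_
  split
  · exact bcLoad_eq i (q i) c
  · rfl

lemma sum_ite_lt_succ {n : ℕ} (f : Fin n → ℝ) (k : ℕ) (hk : k < n) :
    (∑ i : Fin n, if (i : ℕ) < k + 1 then f i else 0)
      = (∑ i : Fin n, if (i : ℕ) < k then f i else 0) + f ⟨k, hk⟩ := by
  have key : ∀ i : Fin n, (if (i : ℕ) < k + 1 then f i else 0)
      = (if (i : ℕ) < k then f i else 0) + (if i = ⟨k, hk⟩ then f i else 0) := by
    intro i
    rcases lt_trichotomy (i : ℕ) k with h | h | h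
    · rw [if_pos (Nat.lt_succ_of_lt h), if_pos h, if_neg, add_zero]
      intro he; rw [he] at h; simp at h
    · have hi : i = ⟨k, hk⟩ := Fin.ext h
      rw [if_pos (by omega), if_neg (by omega), if_pos hi, zero_add]
    · rw [if_neg (by omega), if_neg (by omega), if_neg, add_zero]
      intro he; rw [he] at h; simp at h
  rw [Finset.sum_congr rfl fun i _ => key i, Finset.sum_add_distrib]
  congr 1
  simp


lemma partialLoad_zero {n : ℕ} (q : Fin n → ℕ) (c : ℕ) :
    partialLoad (fun _ => L) (fun _ => hh) q 0 c = 0 := by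
  rw [partialLoad_eq]
  exact Finset.sum_eq_zero fun i _ => by rw [if_neg (by omega)]

lemma greedy_inv {n : ℕ} (hL : 0 < L)
    (hpos : ∀ j, j < L → 0 < hh j) (hle1 : ∀ j, j < L → hh j ≤ 1)
    (hni : ∀ j : ℕ, j + 1 < L → hh (j + 1) ≤ hh j)
    {q : Fin n → ℕ} (hq : IsGreedy (fun _ => L) (fun _ => hh) q) :
    ∀ k, ∀ hk : k < n,
      (∀ i : Fin n, (i : ℕ) ≤ k → 1 ≤ q i ∧ q i ≤ q ⟨k, hk⟩) ∧
      (∀ c, partialLoad (fun _ => L) (fun _ => hh) q (k + 1) c ≤ 1) ∧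
      (∀ j, j + 1 ≤ k → ∀ (h1 : j < n) (h2 : j + 1 < n), q ⟨j + 1, h2⟩ ≤ q ⟨j, h1⟩ + L) := by
  intro k
  induction k with
  | zero =>
    intro hk
    refine ⟨?_, ?_, ?_⟩
    · intro i hi
      have hi0 : i = ⟨0, hk⟩ := Fin.ext (Nat.le_zero.mp hi)
      rw [hi0, hq.1 hk]
      exact ⟨le_refl _, le_refl _⟩
    · intro c
      rw [partialLoad_eq, sum_ite_lt_succ (fun i => BL L hh (q i) c) 0 hk]
      have h0 : (∑ i : Fin n, if (i : ℕ) < 0 then BL L hh (q i) c else 0) = 0 :=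
        Finset.sum_eq_zero fun i _ => by rw [if_neg (by omega)]
      rw [h0, zero_add]
      exact BL_le_one hpos hle1 _ _
    · intro j hj; omega
  | succ k ih =>
    intro hk
    have hkn : k < n := Nat.lt_of_succ_lt hk
    obtain ⟨ih1, ih2, ih3⟩ := ih hkn
    -- the escape position q k + L is in the greedy set
    have hS : (q ⟨k, hkn⟩ + L) ∈ {m | q ⟨k, Nat.lt_of_succ_lt hk⟩ ≤ m ∧
        ∀ c, partialLoad (fun _ => L) (fun _ => hh) q (k + 1) c
          + bcLoad (fun _ => L) (fun _ => hh) ⟨k + 1, hk⟩ m c ≤ 1} := by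
      refine ⟨Nat.le_add_right _ _, ?_⟩
      intro c
      rw [bcLoad_eq]
      by_cases hc : c < q ⟨k, hkn⟩ + L
      · rw [BL_zero_left hc, add_zero]
        exact ih2 c
      · push_neg at hc
        have hP0 : partialLoad (fun _ => L) (fun _ => hh) q (k + 1) c = 0 := by
          rw [partialLoad_eq]
          refine Finset.sum_eq_zero fun i _ => ?_
          by_cases hik : (i : ℕ) < k + 1
          · rw [if_pos hik]
            exact BL_zero_right (by
              have := (ih1 i (Nat.lt_succ_iff.mp hik)).2
              omega)
          · rw [if_neg hik]
        rw [hP0, zero_add]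
        exact BL_le_one hpos hle1 _ _
    have hne : Set.Nonempty {m | q ⟨k, Nat.lt_of_succ_lt hk⟩ ≤ m ∧
        ∀ c, partialLoad (fun _ => L) (fun _ => hh) q (k + 1) c
          + bcLoad (fun _ => L) (fun _ => hh) ⟨k + 1, hk⟩ m c ≤ 1} := ⟨_, hS⟩
    have hmem := hq.2 k hk ▸ Nat.sInf_mem hne
    obtain ⟨hge, hfeas⟩ := hmem
    have hstep : q ⟨k + 1, hk⟩ ≤ q ⟨k, hkn⟩ + L := hq.2 k hk ▸ Nat.sInf_le hS
    refine ⟨?_, ?_, ?_⟩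
    · intro i hi
      rcases Nat.lt_succ_iff_lt_or_eq.mp (Nat.lt_succ_of_le hi) with h | h
      · obtain ⟨ha, hb⟩ := ih1 i (Nat.lt_succ_iff.mp h)
        exact ⟨ha, le_trans hb hge⟩
      · have : i = ⟨k + 1, hk⟩ := Fin.ext h
        rw [this]
        exact ⟨le_trans (ih1 ⟨k, hkn⟩ (le_refl _)).1 hge, le_refl _⟩
    · intro c
      rw [partialLoad_eq, sum_ite_lt_succ (fun i => BL L hh (q i) c) (k + 1) hk,
        ← partialLoad_eq]
      have := hfeas c
      rw [bcLoad_eq] at this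
      exact this
    · intro j hj h1 h2
      rcases Nat.lt_succ_iff_lt_or_eq.mp (Nat.lt_succ_of_le hj) with h | h
      · exact ih3 j (Nat.lt_succ_iff.mp h) h1 h2
      · have hjk : j = k := by omega
        subst hjk
        exact hstep


lemma mem_occupied {n : ℕ} (l : Fin n → ℕ) (p : Fin n → ℕ) (c : ℕ) :
    c ∈ occupied l p ↔ ∃ i : Fin n, ∃ j, j < l i ∧ p i + j = c := by
  unfold occupied
  simp only [Finset.mem_image, Finset.mem_sigma, Finset.mem_univ, true_and,
    Finset.mem_range]
  constructor
  · rintro ⟨⟨i, j⟩, hj, rfl⟩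
    exact ⟨i, j, hj, rfl⟩
  · rintro ⟨i, j, hj, rfl⟩
    exact ⟨⟨i, j⟩, hj, rfl⟩


lemma lower_bound {n : ℕ} (hL : 0 < L)
    (hpos : ∀ j, j < L → 0 < hh j) (hle1 : ∀ j, j < L → hh j ≤ 1)
    (hni : ∀ j : ℕ, j + 1 < L → hh (j + 1) ≤ hh j)
    {q : Fin n → ℕ} (hq : IsGreedy (fun _ => L) (fun _ => hh) q) (hn : 0 < n)
    {p : Fin n → ℕ} (hp : Feasible (fun _ => L) (fun _ => hh) p) :
    q ⟨n - 1, by omega⟩ + L ≤ packLen (fun _ => L) p + 1 := by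
  classical
  obtain ⟨hp1, hp2⟩ := hp
  set O : Finset ℕ := occupied (fun _ => L) p with hO
  set rk : ℕ → ℕ := fun c => 1 + (O.filter (fun x => x < c)).card with hrk
  set r : Fin n → ℕ := fun i => rk (p i) with hr
  -- cells of each chart are occupied
  have hmemO : ∀ (i : Fin n) (j : ℕ), j < L → p i + j ∈ O := by
    intro i j hj
    rw [hO, mem_occupied]
    exact ⟨i, j, hj, rfl⟩
  -- rank of successor of an occupied cell
  have hrk_succ : ∀ c ∈ O, rk (c + 1) = rk c + 1 := by
    intro c hc
    have hfil : O.filter (fun x => x < c + 1) = insert c (O.filter (fun x => x < c)) := by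
      ext x
      simp only [Finset.mem_filter, Finset.mem_insert]
      constructor
      · rintro ⟨hx, hlt⟩
        rcases Nat.lt_succ_iff_lt_or_eq.mp hlt with h | h
        · exact Or.inr ⟨hx, h⟩
        · exact Or.inl h
      · rintro (rfl | ⟨hx, hlt⟩)
        · exact ⟨hc, Nat.lt_succ_self _⟩
        · exact ⟨hx, Nat.lt_succ_of_lt hlt⟩
    rw [hrk]
    simp only
    rw [hfil, Finset.card_insert_of_notMem (by simp)]
    omega
  -- rank within a chart
  have hrk_add : ∀ (i : Fin n) (j : ℕ), j < L → rk (p i + j) = r i + j := by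
    intro i j
    induction j with
    | zero => intro _; simp [hr]
    | succ j ihj =>
      intro hj
      have hj' : j < L := Nat.lt_of_succ_lt hj
      have : p i + (j + 1) = (p i + j) + 1 := by omega
      rw [this, hrk_succ _ (hmemO i j hj'), ihj hj']
      omega
  -- rank is strictly monotone from occupied cells
  have hrk_lt : ∀ c ∈ O, ∀ c', c < c' → rk c < rk c' := by
    intro c hc c' hcc
    have hsub : insert c (O.filter (fun x => x < c)) ⊆ O.filter (fun x => x < c') := by
      intro x hx
      rcases Finset.mem_insert.mp hx with rfl | hx'
      · exact Finset.mem_filter.mpr ⟨hc, hcc⟩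
      · obtain ⟨h1, h2⟩ := Finset.mem_filter.mp hx'
        exact Finset.mem_filter.mpr ⟨h1, lt_trans h2 hcc⟩
    have := Finset.card_le_card hsub
    rw [Finset.card_insert_of_notMem (by simp)] at this
    simp only [hrk]
    omega
  -- rank is injective on occupied cells
  have hrk_inj : ∀ c1 ∈ O, ∀ c2 ∈ O, rk c1 = rk c2 → c1 = c2 := by
    intro c1 h1 c2 h2 heq
    rcases lt_trichotomy c1 c2 with h | h | h
    · exact absurd heq (Nat.ne_of_lt (hrk_lt c1 h1 c2 h))
    · exact h
    · exact absurd heq.symm (Nat.ne_of_lt (hrk_lt c2 h2 c1 h))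
  -- ranks stay within the occupied count
  have hr_le : ∀ i : Fin n, r i + L ≤ O.card + 1 := by
    intro i
    have h1 : rk (p i + (L - 1)) = r i + (L - 1) := hrk_add i (L - 1) (by omega)
    have hsub : insert (p i + (L - 1)) (O.filter (fun x => x < p i + (L - 1))) ⊆ O := by
      intro x hx
      rcases Finset.mem_insert.mp hx with rfl | hx'
      · exact hmemO i (L - 1) (by omega)
      · exact (Finset.mem_filter.mp hx').1
    have h2 := Finset.card_le_card hsub
    rw [Finset.card_insert_of_notMem (by simp)] at h2
    have h3 : rk (p i + (L - 1)) = 1 + (O.filter (fun x => x < p i + (L - 1))).card := rfl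
    omega
  -- the rank packing is feasible
  have hr_feas : ∀ d, (∑ i, BL L hh (r i) d) ≤ 1 := by
    intro d
    by_cases hex : ∃ i : Fin n, r i ≤ d ∧ d < r i + L
    · obtain ⟨i₀, h₀1, h₀2⟩ := hex
      set c : ℕ := p i₀ + (d - r i₀) with hc
      have hcO : c ∈ O := hmemO i₀ _ (by omega)
      have hrkc : rk c = d := by
        rw [hc, hrk_add i₀ _ (by omega)]
        omega
      have key : (∑ i, BL L hh (r i) d) ≤ ∑ i, BL L hh (p i) c := by
        refine Finset.sum_le_sum fun i _ => ?_
        by_cases h1 : r i ≤ d ∧ d < r i + L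
        · obtain ⟨ha, hb⟩ := h1
          have hjL : d - r i < L := by omega
          have hpc : p i + (d - r i) = c := by
            refine hrk_inj _ (hmemO i _ hjL) _ hcO ?_
            rw [hrk_add i _ hjL, hrkc]
            omega
          have e1 : BL L hh (r i) d = hh (d - r i) := by
            rw [BL, if_pos ha, HE, if_pos hjL]
          have e2 : BL L hh (p i) c = hh (d - r i) := by
            rw [BL, if_pos (by omega : p i ≤ c), HE]
            have : c - p i = d - r i := by omega
            rw [this, if_pos hjL]
          rw [e1, e2]
        · have h0 : BL L hh (r i) d = 0 := by
            by_cases ha : r i ≤ d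
            · exact BL_zero_right (by omega)
            · exact BL_zero_left (by omega)
          rw [h0]
          exact BL_nonneg hpos _ _
      calc (∑ i, BL L hh (r i) d) ≤ ∑ i, BL L hh (p i) c := key
        _ = cellLoad (fun _ => L) (fun _ => hh) p c := (cellLoad_eq p c).symm
        _ ≤ 1 := hp2 c
    · push_neg at hex
      have : (∑ i, BL L hh (r i) d) = 0 := by
        refine Finset.sum_eq_zero fun i _ => ?_
        by_cases ha : r i ≤ d
        · exact BL_zero_right (hex i ha)
        · exact BL_zero_left (by omega)
      rw [this]
      exact zero_le_one
  -- sort the ranks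
  set σ : Equiv.Perm (Fin n) := Tuple.sort r with hσ
  set s : Fin n → ℕ := r ∘ σ with hs
  have hs_mono : Monotone s := Tuple.monotone_sort r
  have hs_feas : ∀ d, (∑ i, BL L hh (s i) d) ≤ 1 := by
    intro d
    rw [hs]
    calc (∑ i, BL L hh ((r ∘ σ) i) d) = ∑ i, BL L hh (r i) d :=
        Equiv.sum_comp σ (fun i => BL L hh (r i) d)
      _ ≤ 1 := hr_feas d
  have hs1 : ∀ i, 1 ≤ s i := fun i => Nat.le_add_right 1 _
  have hs_le : ∀ i, s i + L ≤ O.card + 1 := fun i => hr_le (σ i)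
  -- dominance: greedy positions are below sorted rank positions
  obtain ⟨ginv1, ginv2⟩ : True ∧ True := ⟨trivial, trivial⟩
  have inv := greedy_inv hL hpos hle1 hni hq
  have dom : ∀ k, ∀ hk : k < n, ∀ i : Fin n, (i : ℕ) ≤ k → q i ≤ s i := by
    intro k
    induction k with
    | zero =>
      intro hk i hi
      have hi0 : i = ⟨0, hk⟩ := Fin.ext (Nat.le_zero.mp hi)
      rw [hi0, hq.1 hk]
      exact hs1 _
    | succ k ihk =>
      intro hk i hi
      have hkn : k < n := Nat.lt_of_succ_lt hk
      rcases Nat.lt_succ_iff_lt_or_eq.mp (Nat.lt_succ_of_le hi) with h | h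
      · exact ihk hkn i (Nat.lt_succ_iff.mp h)
      · have hieq : i = ⟨k + 1, hk⟩ := Fin.ext h
        rw [hieq]
        set m' : ℕ := s ⟨k + 1, hk⟩ with hm'
        have hmem : m' ∈ {m | q ⟨k, Nat.lt_of_succ_lt hk⟩ ≤ m ∧
            ∀ c, partialLoad (fun _ => L) (fun _ => hh) q (k + 1) c
              + bcLoad (fun _ => L) (fun _ => hh) ⟨k + 1, hk⟩ m c ≤ 1} := by
          constructor
          · exact le_trans (ihk hkn ⟨k, hkn⟩ (le_refl _))
              (hs_mono (show (⟨k, hkn⟩ : Fin n) ≤ ⟨k + 1, hk⟩ by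
                simp [Fin.mk_le_mk]))
          · intro c
            rw [bcLoad_eq]
            by_cases hc : c < m'
            · rw [BL_zero_left hc, add_zero]
              exact (inv k hkn).2.1 c
            · push_neg at hc
              rw [partialLoad_eq]
              have step1 : (∑ i : Fin n, if (i : ℕ) < k + 1 then BL L hh (q i) c else 0)
                  + BL L hh m' c
                  ≤ (∑ i : Fin n, if (i : ℕ) < k + 1 then BL L hh (s i) c else 0)
                  + BL L hh (s ⟨k + 1, hk⟩) c := by
                refine add_le_add (Finset.sum_le_sum fun i _ => ?_) (le_refl _)
                by_cases hik : (i : ℕ) < k + 1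
                · rw [if_pos hik, if_pos hik]
                  have hqs : q i ≤ s i := ihk hkn i (Nat.lt_succ_iff.mp hik)
                  have hsc : s i ≤ c := by
                    refine le_trans (le_trans (hs_mono (show i ≤ (⟨k + 1, hk⟩ : Fin n) by
                      rw [Fin.le_def]; omega)) (le_refl _)) hc
                  exact BL_anti hpos hni hqs hsc
                · rw [if_neg hik, if_neg hik]
              have step2 : (∑ i : Fin n, if (i : ℕ) < k + 1 then BL L hh (s i) c else 0)
                  + BL L hh (s ⟨k + 1, hk⟩) c
                  = ∑ i : Fin n, if (i : ℕ) < k + 2 then BL L hh (s i) c else 0 :=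
                (sum_ite_lt_succ (fun i => BL L hh (s i) c) (k + 1) hk).symm
              have step3 : (∑ i : Fin n, if (i : ℕ) < k + 2 then BL L hh (s i) c else 0)
                  ≤ ∑ i, BL L hh (s i) c := by
                refine Finset.sum_le_sum fun i _ => ?_
                by_cases hik : (i : ℕ) < k + 2
                · rw [if_pos hik]
                · rw [if_neg hik]
                  exact BL_nonneg hpos _ _
              calc (∑ i : Fin n, if (i : ℕ) < k + 1 then BL L hh (q i) c else 0)
                  + BL L hh m' c
                  ≤ _ := step1
                _ = _ := step2
                _ ≤ ∑ i, BL L hh (s i) c := step3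
                _ ≤ 1 := hs_feas c
        rw [hq.2 k hk]
        exact Nat.sInf_le hmem
  -- conclude
  have hdom := dom (n - 1) (by omega) ⟨n - 1, by omega⟩ (le_refl _)
  have hle := hs_le ⟨n - 1, by omega⟩
  have : packLen (fun _ => L) p = O.card := rfl
  omega


lemma greedy_feasible {n : ℕ} (hL : 0 < L)
    (hpos : ∀ j, j < L → 0 < hh j) (hle1 : ∀ j, j < L → hh j ≤ 1)
    (hni : ∀ j : ℕ, j + 1 < L → hh (j + 1) ≤ hh j)
    {q : Fin n → ℕ} (hq : IsGreedy (fun _ => L) (fun _ => hh) q) (hn : 0 < n) :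
    Feasible (fun _ => L) (fun _ => hh) q := by
  have inv := greedy_inv hL hpos hle1 hni hq
  constructor
  · intro i
    exact ((inv (n - 1) (by omega)).1 i (by omega)).1
  · intro c
    have h1 := (inv (n - 1) (by omega)).2.1 c
    have hn1 : n - 1 + 1 = n := by omega
    rw [hn1] at h1
    have h2 : cellLoad (fun _ => L) (fun _ => hh) q c
        = partialLoad (fun _ => L) (fun _ => hh) q n c := by
      rw [cellLoad_eq, partialLoad_eq]
      exact Finset.sum_congr rfl fun i _ => by rw [if_pos i.isLt]
    rw [h2]
    exact h1

lemma packLen_greedy {n : ℕ} (hL : 0 < L)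
    (hpos : ∀ j, j < L → 0 < hh j) (hle1 : ∀ j, j < L → hh j ≤ 1)
    (hni : ∀ j : ℕ, j + 1 < L → hh (j + 1) ≤ hh j)
    {q : Fin n → ℕ} (hq : IsGreedy (fun _ => L) (fun _ => hh) q) (hn : 0 < n) :
    packLen (fun _ => L) q = q ⟨n - 1, by omega⟩ + L - 1 := by
  have inv := greedy_inv hL hpos hle1 hni hq
  have hnn : n - 1 < n := by omega
  set qlast : ℕ := q ⟨n - 1, hnn⟩ with hql
  have hq1 : ∀ i : Fin n, 1 ≤ q i ∧ q i ≤ qlast := fun i => (inv (n - 1) hnn).1 i (by omega)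
  have hstep : ∀ j, ∀ (h1 : j < n) (h2 : j + 1 < n), q ⟨j + 1, h2⟩ ≤ q ⟨j, h1⟩ + L :=
    fun j h1 h2 => (inv (n - 1) hnn).2.2 j (by omega) h1 h2
  have hocc : occupied (fun _ => L) q = Finset.Icc 1 (qlast + L - 1) := by
    ext c
    rw [mem_occupied, Finset.mem_Icc]
    constructor
    · rintro ⟨i, j, hj, rfl⟩
      have := hq1 i
      constructor
      · omega
      · have : q i + j ≤ qlast + (L - 1) := by omega
        omega
    · rintro ⟨hc1, hc2⟩
      set F : Finset (Fin n) := Finset.univ.filter (fun i => q i ≤ c) with hF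
      have hFne : F.Nonempty := by
        refine ⟨⟨0, hn⟩, Finset.mem_filter.mpr ⟨Finset.mem_univ _, ?_⟩⟩
        rw [hq.1 hn]
        exact hc1
      set i₀ : Fin n := F.max' hFne with hi₀
      have hi₀mem : q i₀ ≤ c := (Finset.mem_filter.mp (F.max'_mem hFne)).2
      have hcub : c < q i₀ + L := by
        by_cases hlast : (i₀ : ℕ) = n - 1
        · have : q i₀ = qlast := by
            rw [hql]
            congr 1
            exact Fin.ext hlast
          omega
        · have hlt : (i₀ : ℕ) + 1 < n := by
            have := i₀.isLt
            omega
          have hnotmem : (⟨(i₀ : ℕ) + 1, hlt⟩ : Fin n) ∉ F := by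
            intro hmem
            have := F.le_max' _ hmem
            rw [← hi₀, Fin.le_def] at this
            simp at this
          have hcq : c < q ⟨(i₀ : ℕ) + 1, hlt⟩ := by
            by_contra hcon
            push_neg at hcon
            exact hnotmem (Finset.mem_filter.mpr ⟨Finset.mem_univ _, hcon⟩)
          have := hstep (i₀ : ℕ) i₀.isLt hlt
          have hi₀eta : (⟨(i₀ : ℕ), i₀.isLt⟩ : Fin n) = i₀ := Fin.ext rfl
          rw [hi₀eta] at this
          omega
      exact ⟨i₀, c - q i₀, by omega, by omega⟩
  rw [packLen, hocc, Nat.card_Icc]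
  have := (hq1 ⟨0, hn⟩).1
  have := (hq1 ⟨0, hn⟩).2
  omega

end BCAux

/-- for `n` identical non-increasing BCs (all equal to the BC with `L`
bars of heights `hh 0 ≥ hh 1 ≥ …`), the greedy packing is feasible and achieves the
minimum length over all feasible packings. -/
theorem greedy_optimal_identical_nonincreasing (n : ℕ) (L : ℕ) (hL : 0 < L)
    (hh : ℕ → ℝ) (hval : ValidBC (n := n) (fun _ => L) (fun _ => hh))
    (hni : ∀ j : ℕ, j + 1 < L → hh (j + 1) ≤ hh j)
    (q : Fin n → ℕ) (hq : IsGreedy (fun _ => L) (fun _ => hh) q) :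
    Feasible (fun _ => L) (fun _ => hh) q ∧
      packLen (fun _ => L) q = OPT (n := n) (fun _ => L) (fun _ => hh) := by
  classical
  rcases Nat.eq_zero_or_pos n with hn | hn
  · subst hn
    have hfeas : Feasible (fun _ : Fin 0 => L) (fun _ => hh) q := by
      refine ⟨fun i => i.elim0, fun c => ?_⟩
      simp [cellLoad]
    have hpl : packLen (fun _ : Fin 0 => L) q = 0 := by
      simp [packLen, occupied]
    refine ⟨hfeas, ?_⟩
    have hopt_le : OPT (n := 0) (fun _ => L) (fun _ => hh) ≤ 0 :=
      Nat.sInf_le ⟨q, hfeas, hpl⟩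
    omega
  · have hpos : ∀ j, j < L → 0 < hh j := fun j hj => (hval.2 ⟨0, hn⟩ j hj).1
    have hle1 : ∀ j, j < L → hh j ≤ 1 := fun j hj => (hval.2 ⟨0, hn⟩ j hj).2
    have hfeas := BCAux.greedy_feasible hL hpos hle1 hni hq hn
    refine ⟨hfeas, ?_⟩
    have hmem : packLen (fun _ => L) q ∈ {m | ∃ p, Feasible (fun _ : Fin n => L)
        (fun _ => hh) p ∧ packLen (fun _ => L) p = m} := ⟨q, hfeas, rfl⟩
    have h1 : OPT (n := n) (fun _ => L) (fun _ => hh) ≤ packLen (fun _ => L) q :=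
      Nat.sInf_le hmem
    have h2 : packLen (fun _ => L) q ≤ OPT (n := n) (fun _ => L) (fun _ => hh) := by
      have hoptmem : OPT (n := n) (fun _ => L) (fun _ => hh) ∈ {m | ∃ p,
          Feasible (fun _ : Fin n => L) (fun _ => hh) p ∧ packLen (fun _ => L) p = m} :=
        Nat.sInf_mem ⟨_, hmem⟩
      obtain ⟨p, hp, hpl⟩ := hoptmem
      have hlow := BCAux.lower_bound hL hpos hle1 hni hq hn hp
      have hpl2 := BCAux.packLen_greedy hL hpos hle1 hni hq hn
      omega
    omega
end
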